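/- Let ψ : P → Q be the unique ℂ-algebra homomorphism with ψ(ℓ⁽ⁱ⁾) = D_Q^i((t⁽⁰⁾)²) and ψ(w⁽ⁱ⁾) = D_Q^i((t⁽⁰⁾)³) for all i ≥ 0, and let I ⊆ P be the ideal generated by {Dⁱ((w⁽⁰⁾)² − (ℓ⁽⁰⁾)³) : i ≥ 0}. Then ψ induces an isomorphism of ℂ-algebras from P/radical(I) onto the ℂ-subalgebra A of Q generated by {D_Q^i((t⁽⁰⁾)²) : i ≥ 0} ∪ {D_Q^i((t⁽⁰⁾)³) : i ≥ 0}. In particular, the reduced coordinate ring of the arc space of the cuspidal cubic is an integral domain, isomorphic to A. -/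

import Mathlib

/-!
Since `ψ ∘ D = D_Q ∘ ψ` and `ψ (w² - ℓ³) = t⁶ - t⁶ = 0`, `ψ` kills `I`; as `ker ψ` is prime, it
remains to show `ker ψ ⊆ 𝔭` for every prime `𝔭 ⊇ I`. Let `φ : P → K` be the point with values in
the fraction field of `P/𝔭`, and expand it in Taylor series `T p = ∑ φ (Dⁿ p) zⁿ / n!` in `K⟦z⟧`;
this is an algebra map turning `D` into `d/dz`. Because `𝔭 ⊇ I`, `(T w)² = (T ℓ)³`, and since `K⟦z⟧`
is integrally closed, `T ℓ = s²` and `T w = s³` for some `s`. The point `χ : Q → K` sending `t⁽ⁿ⁾`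
to `n! [zⁿ] s` has Taylor series of `t` equal to `s`, so the Taylor maps of `φ` and `χ ∘ ψ` agree on
`ℓ, w` and hence everywhere. Taking constant terms, `φ = χ ∘ ψ`, so `ker ψ ⊆ ker φ = 𝔭`.
-/

open MvPolynomial

noncomputable section

/-- The polynomial ring `P = ℂ[ℓ⁽⁰⁾, ℓ⁽¹⁾, …, w⁽⁰⁾, w⁽¹⁾, …]`:
variables are indexed by `Fin 2 × ℕ`, where `(0, i)` is `ℓ⁽ⁱ⁾` and `(1, i)` is `w⁽ⁱ⁾`. -/
abbrev P : Type := MvPolynomial (Fin 2 × ℕ) ℂ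

/-- The unique ℂ-linear derivation `D : P → P` with `D(ℓ⁽ⁱ⁾) = ℓ⁽ⁱ⁺¹⁾`, `D(w⁽ⁱ⁾) = w⁽ⁱ⁺¹⁾`. -/
def D : Derivation ℂ P P :=
  MvPolynomial.mkDerivation ℂ (fun p : Fin 2 × ℕ => (X (p.1, p.2 + 1) : P))

/-- `ℓ⁽ⁱ⁾` -/
def lv (i : ℕ) : P := X (0, i)

/-- `w⁽ⁱ⁾` -/
def wv (i : ℕ) : P := X (1, i)

/-- The polynomial ring `Q = ℂ[t⁽⁰⁾, t⁽¹⁾, …]`. -/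
abbrev Q : Type := MvPolynomial ℕ ℂ

/-- The unique ℂ-linear derivation `D_Q : Q → Q` with `D_Q(t⁽ⁱ⁾) = t⁽ⁱ⁺¹⁾`. -/
def DQ : Derivation ℂ Q Q :=
  MvPolynomial.mkDerivation ℂ (fun i : ℕ => (X (i + 1) : Q))

/-- `t⁽⁰⁾` -/
def t : Q := X 0

/-- `f⁽ⁱ⁾ = Dⁱ((w⁽⁰⁾)² − (ℓ⁽⁰⁾)³)`. -/
def fd (i : ℕ) : P := (⇑D)^[i] (wv 0 ^ 2 - lv 0 ^ 3)

/-- The ideal `I` generated by all `f⁽ⁱ⁾`, `i ≥ 0`. -/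
def I : Ideal P := Ideal.span (Set.range fd)

/-- The ℂ-algebra homomorphism `ψ : P → Q` with `ψ(ℓ⁽ⁱ⁾) = D_Q^i((t⁽⁰⁾)²)` and
`ψ(w⁽ⁱ⁾) = D_Q^i((t⁽⁰⁾)³)`. -/
def ψ : P →ₐ[ℂ] Q :=
  aeval (fun p : Fin 2 × ℕ => (⇑DQ)^[p.2] (if p.1 = 0 then t ^ 2 else t ^ 3))

/-- The ℂ-subalgebra `A ⊆ Q` generated by all `D_Q^i((t⁽⁰⁾)²)` and `D_Q^i((t⁽⁰⁾)³)`. -/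
def A : Subalgebra ℂ Q :=
  Algebra.adjoin ℂ
    ((Set.range fun i : ℕ => (⇑DQ)^[i] (t ^ 2)) ∪ (Set.range fun i : ℕ => (⇑DQ)^[i] (t ^ 3)))

namespace Derivation

variable {R A : Type*} [CommRing R] [CommRing A] [Algebra R A] (d : Derivation R A A)

open Finset in
theorem iterate_apply_mul (n : ℕ) (a b : A) :
    (⇑d)^[n] (a * b) =
      ∑ ij ∈ antidiagonal n, n.choose ij.1 • ((⇑d)^[ij.1] a * (⇑d)^[ij.2] b) := by
  induction n with
  | zero => simp
  | succ n ih =>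
    rw [sum_antidiagonal_choose_succ_nsmul (fun i j => (⇑d)^[i] a * (⇑d)^[j] b) n]
    simp only [Function.iterate_succ_apply', ih, map_sum, map_nsmul, leibniz, smul_eq_mul,
      nsmul_add, sum_add_distrib]
    congr 1
    refine sum_congr rfl fun ⟨i, j⟩ hij ↦ ?_
    rw [Nat.choose_symm_of_eq_add (mem_antidiagonal.1 hij).symm]
    ring

theorem iterate_map_algebraMap {n : ℕ} (hn : n ≠ 0) (r : R) :
    (⇑d)^[n] (algebraMap R A r) = 0 := by
  obtain ⟨m, rfl⟩ := Nat.exists_eq_succ_of_ne_zero hn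
  rw [Function.iterate_succ_apply, map_algebraMap, Function.iterate_fixed (map_zero d)]

variable {K : Type*} [Field K] [CharZero K] [Algebra R K] (φ : A →ₐ[R] K)

def taylor : A →ₐ[R] PowerSeries K where
  toFun a := .mk fun n => φ ((⇑d)^[n] a) / n.factorial
  map_one' := by
    rw [← map_one (algebraMap R A)]
    ext (_ | n)
    · simp
    · simp [PowerSeries.coeff_one]
  map_mul' a b := by
    ext n
    simp only [PowerSeries.coeff_mk, PowerSeries.coeff_mul, iterate_apply_mul, map_sum,
      map_nsmul, map_mul, Finset.sum_div]
    refine Finset.sum_congr rfl fun ⟨i, j⟩ hij ↦ ?_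
    obtain rfl : i + j = n := Finset.HasAntidiagonal.mem_antidiagonal.1 hij
    have hfact : ((i + j).factorial : K) ≠ 0 := Nat.cast_ne_zero.2 (i + j).factorial_ne_zero
    rw [nsmul_eq_mul, Nat.cast_add_choose]
    field_simp
  map_zero' := by ext n; simp [Function.iterate_fixed (map_zero d)]
  map_add' a b := by ext n; simp [add_div]
  commutes' r := by
    ext (_ | n)
    · simp [PowerSeries.algebraMap_apply]
    · simp [PowerSeries.algebraMap_apply, iterate_map_algebraMap d n.succ_ne_zero]

theorem coeff_taylor (a : A) (n : ℕ) :
    PowerSeries.coeff n (d.taylor φ a) = φ ((⇑d)^[n] a) / n.factorial := by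
  simp [taylor]

theorem constantCoeff_taylor (a : A) : PowerSeries.constantCoeff (d.taylor φ a) = φ a := by
  simp [← PowerSeries.coeff_zero_eq_constantCoeff_apply, coeff_taylor]

theorem taylor_semiconj : Function.Semiconj (d.taylor φ) d (PowerSeries.derivative K) :=
  fun a => by
    ext n
    rw [PowerSeries.coeff_derivative, coeff_taylor, coeff_taylor, ← Function.iterate_succ_apply,
      Nat.factorial_succ]
    push_cast
    field_simp

end Derivation

theorem IsIntegrallyClosed.exists_sq_eq_and_cube_eq {R : Type*} [CommRing R] [IsDomain R]
    [IsIntegrallyClosed R] {x y : R} (h : y ^ 2 = x ^ 3) : ∃ s, s ^ 2 = x ∧ s ^ 3 = y := by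
  rcases eq_or_ne x 0 with rfl | hx
  · exact ⟨0, by simp, by simp [show y = 0 by simpa using h]⟩
  have hinj := IsFractionRing.injective R (FractionRing R)
  have hx' : algebraMap R (FractionRing R) x ≠ 0 := (map_ne_zero_iff _ hinj).2 hx
  -- `s = y / x` is integral since `s ^ 2 = x`.
  have hsq : (algebraMap R _ y / algebraMap R (FractionRing R) x) ^ 2 = algebraMap R _ x := by
    rw [div_pow, ← map_pow, h, map_pow]
    field_simp
  obtain ⟨s, hs⟩ := exists_algebraMap_eq_of_isIntegral_pow two_pos (hsq ▸ isIntegral_algebraMap)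
  have hs2 : s ^ 2 = x := hinj <| by rw [map_pow, hs, hsq]
  refine ⟨s, hs2, hinj ?_⟩
  rw [pow_succ, map_mul, hs2, hs]
  field_simp

theorem Function.iterate_apply_eq_of_map_succ {α : Type*} {f : α → α} {x : ℕ → α}
    (h : ∀ i, f (x i) = x (i + 1)) (n : ℕ) : f^[n] (x 0) = x n := by
  induction n with
  | zero => rfl
  | succ n ih => rw [Function.iterate_succ_apply', ih, h]

theorem MvPolynomial.algHom_semiconj_derivation {σ R B : Type*} [CommRing R] [CommRing B]
    [Algebra R B] (f : MvPolynomial σ R →ₐ[R] B)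
    (d : Derivation R (MvPolynomial σ R) (MvPolynomial σ R)) (d' : Derivation R B B)
    (h : ∀ i, f (d (X i)) = d' (f (X i))) : Function.Semiconj f d d' := by
  intro p
  induction p using MvPolynomial.induction_on with
  | C a => simp [derivation_C, ← algebraMap_eq]
  | add p q hp hq => simp only [map_add, hp, hq]
  | mul_X p i hp => simp only [Derivation.leibniz, smul_eq_mul, map_add, map_mul, hp, h]

theorem D_iterate_X (e : Fin 2) (i : ℕ) : (⇑D)^[i] (X (e, 0)) = X (e, i) :=
  Function.iterate_apply_eq_of_map_succ (x := fun j => X (e, j)) (fun _ => mkDerivation_X ℂ _ _) i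

theorem DQ_iterate_t (n : ℕ) : (⇑DQ)^[n] t = X n :=
  Function.iterate_apply_eq_of_map_succ (x := X) (fun j => mkDerivation_X ℂ _ j) n

theorem ψ_X (e : Fin 2) (i : ℕ) :
    ψ (X (e, i)) = (⇑DQ)^[i] (if e = 0 then t ^ 2 else t ^ 3) :=
  aeval_X _ _

theorem ψ_semiconj : Function.Semiconj ψ D DQ :=
  algHom_semiconj_derivation ψ D DQ fun ⟨e, i⟩ => by
    rw [D, mkDerivation_X, ψ_X, ψ_X, Function.iterate_succ_apply']

theorem I_le_ker_ψ : I ≤ RingHom.ker ψ := by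
  refine Ideal.span_le.2 ?_
  rintro _ ⟨i, rfl⟩
  have hcusp : ψ (wv 0 ^ 2 - lv 0 ^ 3) = 0 := by simp [wv, lv, ψ_X, ← pow_mul]
  rw [SetLike.mem_coe, RingHom.mem_ker, fd, ψ_semiconj.iterate_right, hcusp,
    Function.iterate_fixed (map_zero DQ)]

theorem range_ψ : ψ.range = A := by
  rw [A, ψ, ← Algebra.adjoin_range_eq_range_aeval]
  congr 1
  ext q
  simp [Prod.exists, Fin.exists_fin_two]

theorem exists_algHom_comp_ψ_eq {K : Type*} [Field K] [Algebra ℂ K] (φ : P →ₐ[ℂ] K)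
    (hφ : I ≤ RingHom.ker φ) : ∃ χ : Q →ₐ[ℂ] K, χ.comp ψ = φ := by
  have : CharZero K := charZero_of_injective_algebraMap (algebraMap ℂ K).injective
  have hcusp : D.taylor φ (wv 0) ^ 2 = D.taylor φ (lv 0) ^ 3 := by
    rw [← map_pow, ← map_pow, ← sub_eq_zero, ← map_sub]
    ext n
    rw [D.coeff_taylor, ← fd, hφ (Ideal.subset_span ⟨n, rfl⟩), zero_div, map_zero]
  obtain ⟨s, hs2, hs3⟩ := IsIntegrallyClosed.exists_sq_eq_and_cube_eq hcusp
  let χ : Q →ₐ[ℂ] K := aeval fun n => n.factorial * PowerSeries.coeff n s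
  have hχt : DQ.taylor χ t = s := by
    ext n
    rw [DQ.coeff_taylor, DQ_iterate_t, aeval_X,
      mul_div_cancel_left₀ _ (Nat.cast_ne_zero.2 n.factorial_ne_zero)]
  have htaylor : (DQ.taylor χ).comp ψ = D.taylor φ := by
    refine algHom_ext fun ⟨e, i⟩ => ?_
    rw [AlgHom.comp_apply, ψ_X, ← D_iterate_X, (DQ.taylor_semiconj χ).iterate_right,
      (D.taylor_semiconj φ).iterate_right]
    congr 1
    fin_cases e
    · simp [hχt, hs2, lv]
    · simp [hχt, hs3, wv]
  refine ⟨χ, AlgHom.ext fun p => ?_⟩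
  rw [AlgHom.comp_apply, ← DQ.constantCoeff_taylor χ, ← AlgHom.comp_apply, htaylor,
    D.constantCoeff_taylor]

theorem ker_ψ_le_radical_I : RingHom.ker ψ ≤ I.radical := by
  refine Ideal.radical_eq_sInf I ▸ le_sInf fun 𝔭 ⟨hI𝔭, h𝔭⟩ => ?_
  let φ : P →ₐ[ℂ] FractionRing (P ⧸ 𝔭) :=
    (IsScalarTower.toAlgHom ℂ (P ⧸ 𝔭) _).comp (Ideal.Quotient.mkₐ ℂ 𝔭)
  have hker : RingHom.ker φ = 𝔭 :=
    (RingHom.ker_comp_of_injective _ (IsFractionRing.injective _ _)).trans Ideal.mk_ker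
  obtain ⟨χ, hχ⟩ := exists_algHom_comp_ψ_eq φ (hker.symm ▸ hI𝔭)
  intro p hp
  rw [← hker, RingHom.mem_ker, ← hχ, AlgHom.comp_apply, RingHom.mem_ker.1 hp, map_zero]

theorem radical_I_eq_ker_ψ : I.radical = RingHom.ker ψ :=
  le_antisymm ((RingHom.ker_isPrime ψ).radical_le_iff.2 I_le_ker_ψ) ker_ψ_le_radical_I

/-- `ψ` induces a ℂ-algebra isomorphism `P/radical(I) ≃ A`; in particular the reduced
coordinate ring of the arc space of the cuspidal cubic is an integral domain. -/
theorem quotient_radical_iso_A :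
    (∃ e : (P ⧸ I.radical) ≃ₐ[ℂ] A,
        ∀ p : P, (e (Ideal.Quotient.mk I.radical p) : Q) = ψ p) ∧
      IsDomain (P ⧸ I.radical) := by
  refine ⟨⟨(Ideal.quotientEquivAlgOfEq ℂ radical_I_eq_ker_ψ).trans
    ((Ideal.quotientKerEquivRange ψ).trans (Subalgebra.equivOfEq _ _ range_ψ)), fun p => rfl⟩, ?_⟩
  have : I.radical.IsPrime := radical_I_eq_ker_ψ ▸ RingHom.ker_isPrime ψ
  exact Ideal.Quotient.isDomain _
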